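/- arXiv:1511.00454 — 3 statements merged into one kernel-verified Lean document; each statement's English description precedes it below -/
import Mathlib

section
/- If (λ_m) and (μ_n) are sequences of real numbers with Σ_m (1 + λ_m²)^{-r/2} < ∞ and Σ_n (1 + μ_n²)^{-s/2} < ∞ for some r, s > 0, then the double sum Σ_{m,n} (1 + λ_m² + μ_n²)^{-(r+s)/2} converges. -/
/-- If `Σ_m (1 + λ_m²)^{-r/2} < ∞` and `Σ_n (1 + μ_n²)^{-s/2} < ∞` for some `r, s > 0`,
then the double sum `Σ_{m,n} (1 + λ_m² + μ_n²)^{-(r+s)/2}` converges. -/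
theorem stmt3 (r s : ℝ) (hr : 0 < r) (hs : 0 < s) (lam mu : ℕ → ℝ)
    (h1 : Summable fun m : ℕ => (1 + lam m ^ 2) ^ (-(r / 2)))
    (h2 : Summable fun n : ℕ => (1 + mu n ^ 2) ^ (-(s / 2))) :
    Summable fun p : ℕ × ℕ => (1 + lam p.1 ^ 2 + mu p.2 ^ 2) ^ (-((r + s) / 2)) := by
  have hsum := h1.mul_of_nonneg h2
    (fun m => Real.rpow_nonneg (by positivity) _)
    (fun n => Real.rpow_nonneg (by positivity) _)
  refine hsum.of_nonneg_of_le (fun p => Real.rpow_nonneg (by positivity) _) ?_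
  intro p
  have hl : (0:ℝ) < 1 + lam p.1 ^ 2 := by positivity
  have hm : (0:ℝ) < 1 + mu p.2 ^ 2 := by positivity
  have hb : (0:ℝ) < 1 + lam p.1 ^ 2 + mu p.2 ^ 2 := by positivity
  have key : (1 + lam p.1 ^ 2 + mu p.2 ^ 2) ^ (-((r + s) / 2))
      = (1 + lam p.1 ^ 2 + mu p.2 ^ 2) ^ (-(r / 2)) *
        (1 + lam p.1 ^ 2 + mu p.2 ^ 2) ^ (-(s / 2)) := by
    rw [← Real.rpow_add hb]; ring_nf
  rw [key]
  exact mul_le_mul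
    (Real.rpow_le_rpow_of_nonpos hl (by nlinarith [sq_nonneg (mu p.2)]) (by linarith))
    (Real.rpow_le_rpow_of_nonpos hm (by nlinarith [sq_nonneg (lam p.1)]) (by linarith))
    (Real.rpow_nonneg hb.le _) (Real.rpow_nonneg hl.le _)
end

section
/- Let P be the Toeplitz projection on ℓ²(ℤ) and M_f the multiplication operator by a continuous function f ∈ C(𝕋) (acting via Fourier coefficients on ℓ²(ℤ)). Then [P, M_f] is a compact operator. -/
open scoped InnerProductSpace

/-- A rank-one operator is compact. -/
lemma rankOne_isCompactOperator {H : Type*} [NormedAddCommGroup H] [InnerProductSpace ℂ H]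
    (f : H →L[ℂ] ℂ) (v : H) : IsCompactOperator (fun x => f x • v) := by
  refine ⟨(fun c : ℂ => c • v) '' Metric.closedBall 0 ‖f‖, ?_, ?_⟩
  · exact (ProperSpace.isCompact_closedBall _ _).image (by continuity)
  · refine Filter.mem_of_superset (Metric.closedBall_mem_nhds (0 : H) one_pos) ?_
    intro x hx
    refine ⟨f x, ?_, rfl⟩
    simp only [Metric.mem_closedBall, dist_zero_right] at hx ⊢
    calc ‖f x‖ ≤ ‖f‖ * ‖x‖ := f.le_opNorm x
    _ ≤ ‖f‖ * 1 := by gcongr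
    _ = ‖f‖ := mul_one _

/-- Identify `ℓ²(ℤ) ≅ L²(𝕋)` via the Fourier basis `(e_k)_{k∈ℤ}`; let `P` be the
Toeplitz (Hardy space) projection onto the nonnegative Fourier modes, and let `M` be the
multiplication operator by a continuous function `f ∈ C(𝕋)`, i.e. an element of the
C*-algebra generated by the unitary bilateral shift `S` (which corresponds to
multiplication by the generator `z` of `C(𝕋)`).  Then the commutator `[P, M]` is a
compact operator. -/
theorem stmt13 {H : Type*} [NormedAddCommGroup H] [InnerProductSpace ℂ H]
    [CompleteSpace H] (e : HilbertBasis ℤ ℂ H)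
    (S : H →L[ℂ] H) (hS : ∀ k : ℤ, S (e k) = e (k + 1))
    (hSunitary : S ∈ unitary (H →L[ℂ] H))
    (P : H →L[ℂ] H) (hPidem : IsIdempotentElem P) (hPsa : IsSelfAdjoint P)
    (hP : ∀ k : ℤ, P (e k) = if 0 ≤ k then e k else 0)
    (M : H →L[ℂ] H) (hM : M ∈ StarAlgebra.elemental ℂ S) :
    IsCompactOperator (P * M - M * P) := by
  have horth : ∀ i j : ℤ, ⟪e i, e j⟫_ℂ = if i = j then 1 else 0 :=
    orthonormal_iff_ite.mp e.orthonormal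
  have hSstar : ∀ k : ℤ, (star S) (e k) = e (k - 1) := by
    intro k
    have h1 : star S * S = 1 := hSunitary.1
    calc (star S) (e k) = (star S) (S (e (k - 1))) := by rw [hS, sub_add_cancel]
    _ = (star S * S) (e (k - 1)) := rfl
    _ = e (k - 1) := by rw [h1]; rfl
  have hdense : Dense (↑(Submodule.span ℂ (Set.range ⇑e)) : Set H) := by
    rw [Submodule.dense_iff_topologicalClosure_eq_top]
    exact e.dense_span
  induction hM using StarAlgebra.elemental.induction_on with
  | self =>
    have key : P * S - S * P = (innerSL ℂ (e (-1 : ℤ))).smulRight (e 0) := by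
      refine ContinuousLinearMap.ext_on hdense ?_
      rintro _ ⟨k, rfl⟩
      simp only [ContinuousLinearMap.sub_apply, ContinuousLinearMap.mul_apply,
        ContinuousLinearMap.smulRight_apply, innerSL_apply_apply, hS, hP,
        apply_ite S, map_zero, horth]
      by_cases h0 : 0 ≤ k
      · rw [if_pos h0, if_pos (by omega : (0:ℤ) ≤ k + 1), if_neg (by omega : ¬ (-1:ℤ) = k)]
        simp
      · by_cases h1 : k = -1
        · subst h1
          norm_num
        · rw [if_neg h0, if_neg (by omega : ¬ (0:ℤ) ≤ k + 1), if_neg (by omega : ¬ (-1:ℤ) = k)]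
          simp
    rw [key]
    exact rankOne_isCompactOperator _ _
  | star_self =>
    have key : P * star S - star S * P = (innerSL ℂ (e (0 : ℤ))).smulRight (-(e (-1 : ℤ))) := by
      refine ContinuousLinearMap.ext_on hdense ?_
      rintro _ ⟨k, rfl⟩
      simp only [ContinuousLinearMap.sub_apply, ContinuousLinearMap.mul_apply,
        ContinuousLinearMap.smulRight_apply, innerSL_apply_apply, hSstar, hP,
        apply_ite (⇑(star S)), map_zero, horth]
      by_cases h0 : k = 0
      · subst h0
        rw [if_pos le_rfl, if_neg (by omega : ¬ (0:ℤ) ≤ 0 - 1), if_pos rfl]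
        norm_num
      · by_cases h1 : 0 ≤ k
        · rw [if_pos h1, if_pos (by omega : (0:ℤ) ≤ k - 1), if_neg (by omega : ¬ (0:ℤ) = k)]
          simp
        · rw [if_neg h1, if_neg (by omega : ¬ (0:ℤ) ≤ k - 1), if_neg (by omega : ¬ (0:ℤ) = k)]
          simp
    rw [key]
    exact rankOne_isCompactOperator _ _
  | algebraMap r =>
    have : P * algebraMap ℂ (H →L[ℂ] H) r - algebraMap ℂ (H →L[ℂ] H) r * P = 0 := by
      rw [Algebra.algebraMap_eq_smul_one, mul_smul_comm, smul_mul_assoc, one_mul, mul_one,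
        sub_self]
    rw [this]
    exact isCompactOperator_zero
  | add u hu v hv hu' hv' =>
    have : P * (u + v) - (u + v) * P = (P * u - u * P) + (P * v - v * P) := by noncomm_ring
    rw [this]
    exact hu'.add hv'
  | mul u hu v hv hu' hv' =>
    have : P * (u * v) - (u * v) * P = (P * u - u * P) * v + u * (P * v - v * P) := by noncomm_ring
    rw [this]
    exact (hu'.comp_clm v).add (hv'.clm_comp u)
  | closure s hs hsP v hv =>
    have hcont : Continuous fun u : H →L[ℂ] H => P * u - u * P := by
      exact (continuous_const.mul continuous_id).sub (continuous_id.mul continuous_const)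
    have hclosed : IsClosed {u : H →L[ℂ] H | IsCompactOperator (P * u - u * P)} :=
      IsClosed.preimage hcont isClosed_setOf_isCompactOperator
    exact closure_minimal (fun u hu => hsP u hu) hclosed hv
end

section
/- Let (λ'_m) be the sequence λ₁, −λ₁, λ₂, −λ₂, … obtained by interleaving a real sequence (λ_m) with its negatives, and (μ'_n) the sequence μ₁, μ₁, μ₂, μ₂, … doubling each term of (μ_n). If Σ_m (1+λ_m²)^{-r/2} < ∞ and Σ_n (1+μ_n²)^{-s/2} < ∞, then Σ_{m,n} (1 + λ'_m² + μ'_n²)^{-(r+s)/2} < ∞. -/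
lemma half_summable {g : ℕ → ℝ} (hg : Summable g) (hnn : ∀ k, 0 ≤ g k) :
    Summable fun m : ℕ => g (m / 2) := by
  have h2 : Summable fun p : ℕ × Fin 2 => g p.1 := by
    rw [summable_prod_of_nonneg (fun p => hnn p.1)]
    refine ⟨fun x => summable_of_finite_support (Set.Finite.subset (Set.finite_univ) (by simp)),
      ?_⟩
    have : (fun x : ℕ => ∑' _ : Fin 2, g x) = fun x => 2 * g x := by
      funext x; rw [tsum_fintype]; simp [Finset.sum_const, two_mul]
    rw [this]
    exact hg.mul_left 2
  have := h2.comp_injective (Nat.divModEquiv 2).injective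
  simpa [Nat.divModEquiv, Function.comp_def] using this

/-- Let `(λ'_m)` be the sequence `λ₁, −λ₁, λ₂, −λ₂, …` obtained by interleaving a real
sequence `(λ_m)` with its negatives, and `(μ'_n)` the sequence `μ₁, μ₁, μ₂, μ₂, …`
doubling each term of `(μ_n)` (both indexed from `0`).  If
`Σ_m (1 + λ_m²)^{-r/2} < ∞` and `Σ_n (1 + μ_n²)^{-s/2} < ∞` with `r, s > 0`, then
`Σ_{m,n} (1 + λ'_m² + μ'_n²)^{-(r+s)/2} < ∞`. -/
theorem stmt18 (r s : ℝ) (hr : 0 < r) (hs : 0 < s) (lam mu lam' mu' : ℕ → ℝ)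
    (hlam' : ∀ k : ℕ, lam' (2 * k) = lam k ∧ lam' (2 * k + 1) = -lam k)
    (hmu' : ∀ k : ℕ, mu' (2 * k) = mu k ∧ mu' (2 * k + 1) = mu k)
    (h1 : Summable fun m : ℕ => (1 + lam m ^ 2) ^ (-(r / 2)))
    (h2 : Summable fun n : ℕ => (1 + mu n ^ 2) ^ (-(s / 2))) :
    Summable fun p : ℕ × ℕ => (1 + lam' p.1 ^ 2 + mu' p.2 ^ 2) ^ (-((r + s) / 2)) := by
  have hlamsq : ∀ m : ℕ, lam' m ^ 2 = lam (m / 2) ^ 2 := by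
    intro m
    rcases Nat.even_or_odd m with ⟨k, hk⟩ | ⟨k, hk⟩
    · have : m = 2 * k := by omega
      rw [this, (hlam' k).1, Nat.mul_div_cancel_left _ (by norm_num)]
    · rw [hk, (hlam' k).2]
      have : (2 * k + 1) / 2 = k := by omega
      rw [this]; ring
  have hmusq : ∀ n : ℕ, mu' n ^ 2 = mu (n / 2) ^ 2 := by
    intro n
    rcases Nat.even_or_odd n with ⟨k, hk⟩ | ⟨k, hk⟩
    · have : n = 2 * k := by omega
      rw [this, (hmu' k).1, Nat.mul_div_cancel_left _ (by norm_num)]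
    · rw [hk, (hmu' k).2]
      have : (2 * k + 1) / 2 = k := by omega
      rw [this]
  have hF : Summable fun m : ℕ => (1 + lam (m / 2) ^ 2) ^ (-(r / 2)) :=
    half_summable h1 (fun k => Real.rpow_nonneg (by positivity) _)
  have hG : Summable fun n : ℕ => (1 + mu (n / 2) ^ 2) ^ (-(s / 2)) :=
    half_summable h2 (fun k => Real.rpow_nonneg (by positivity) _)
  have hprod := hF.mul_of_nonneg hG
    (fun m => Real.rpow_nonneg (by positivity) _)
    (fun n => Real.rpow_nonneg (by positivity) _)
  refine Summable.of_nonneg_of_le (fun p => Real.rpow_nonneg (by positivity) _) ?_ hprod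
  intro ⟨m, n⟩
  simp only [hlamsq, hmusq]
  set a := lam (m / 2) ^ 2 with ha
  set b := mu (n / 2) ^ 2 with hb
  have ha0 : 0 ≤ a := sq_nonneg _
  have hb0 : 0 ≤ b := sq_nonneg _
  have hab : (0:ℝ) < 1 + a + b := by positivity
  have hsplit : (1 + a + b) ^ (-((r + s) / 2)) =
      (1 + a + b) ^ (-(r / 2)) * (1 + a + b) ^ (-(s / 2)) := by
    rw [← Real.rpow_add hab]; ring_nf
  rw [hsplit]
  exact mul_le_mul
    (Real.rpow_le_rpow_of_nonpos (by positivity) (by linarith) (by linarith))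
    (Real.rpow_le_rpow_of_nonpos (by positivity) (by linarith) (by linarith))
    (Real.rpow_nonneg hab.le _) (Real.rpow_nonneg (by positivity) _)
end
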